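/- For every ℓ ≥ 1 and every configuration σ, the truncated flip rate satisfies c_i^{[ℓ]}(σ) = M_i [λ_i(0)·(1/2) + Σ_{k=1}^ℓ λ_i(k) p_i^{[k]}(-σ(i)|σ)], i.e., the difference c_i^{[k]}(σ) - c_i^{[k-1]}(σ) equals M_i λ_i(k) p_i^{[k]}(-σ(i)|σ) for each k ≥ 1 (with c_i^{[0]}(σ) := (1/2) M_i λ_i(0)), and each such difference is nonnegative. -/

import Mathlib

open Real

noncomputable section

/-- The `L¹` ball of radius `k` around `i` in `ℤ^d`, as a finite set. -/
def ball {d : ℕ} (i : Fin d → ℤ) (k : ℕ) : Finset (Fin d → ℤ) :=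
  (Finset.Icc (fun t => i t - (k : ℤ)) (fun t => i t + (k : ℤ))).filter
    (fun j => (∑ t, |j t - i t|) ≤ (k : ℤ))

/-- `Σ_{B ∋ i} |J_B|`. -/
def totalJ {d : ℕ} (J : Finset (Fin d → ℤ) → ℝ) (i : Fin d → ℤ) : ℝ :=
  ∑' B : Finset (Fin d → ℤ), if i ∈ B then |J B| else 0

/-- `S_i^{>k} = Σ_{B ∋ i, B ⊄ B_i(k)} |J_B|`. -/
def tailJ {d : ℕ} (J : Finset (Fin d → ℤ) → ℝ) (i : Fin d → ℤ) (k : ℕ) : ℝ :=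
  ∑' B : Finset (Fin d → ℤ), if i ∈ B ∧ ¬ B ⊆ ball i k then |J B| else 0

/-- The telescoped tail-exponential sequence `λ_i(k)`. -/
def lam {d : ℕ} (J : Finset (Fin d → ℤ) → ℝ) (β : ℝ) (i : Fin d → ℤ) : ℕ → ℝ
  | 0 => exp (-2 * β * totalJ J i)
  | 1 => exp (-β * tailJ J i 1) - exp (-2 * β * totalJ J i)
  | (k+2) => exp (-β * tailJ J i (k+2)) - exp (-β * tailJ J i (k+1))

/-- `χ_B(σ) = Π_{j ∈ B} σ(j)`. -/
def chi {d : ℕ} (B : Finset (Fin d → ℤ)) (σ : (Fin d → ℤ) → ℝ) : ℝ :=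
  ∏ j ∈ B, σ j

/-- `Σ_{B ∋ i} J_B χ_B(σ)`. -/
def energy {d : ℕ} (J : Finset (Fin d → ℤ) → ℝ) (i : Fin d → ℤ)
    (σ : (Fin d → ℤ) → ℝ) : ℝ :=
  ∑' B : Finset (Fin d → ℤ), if i ∈ B then J B * chi B σ else 0

/-- `Σ_{B ∋ i, B ⊆ B_i(k)} J_B χ_B(σ)`. -/
def energyIn {d : ℕ} (J : Finset (Fin d → ℤ) → ℝ) (i : Fin d → ℤ) (k : ℕ)
    (σ : (Fin d → ℤ) → ℝ) : ℝ :=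
  ∑' B : Finset (Fin d → ℤ), if i ∈ B ∧ B ⊆ ball i k then J B * chi B σ else 0

/-- `Σ_{B ∋ i, B ⊆ B_i(k)} |J_B|`. -/
def innerAbs {d : ℕ} (J : Finset (Fin d → ℤ) → ℝ) (i : Fin d → ℤ) (k : ℕ) : ℝ :=
  ∑' B : Finset (Fin d → ℤ), if i ∈ B ∧ B ⊆ ball i k then |J B| else 0

/-- `Σ_{B ∋ i, B ⊆ B_i(k), B ⊄ B_i(k-1)} J_B χ_B(σ)`. -/
def shellE {d : ℕ} (J : Finset (Fin d → ℤ) → ℝ) (i : Fin d → ℤ) (k : ℕ)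
    (σ : (Fin d → ℤ) → ℝ) : ℝ :=
  ∑' B : Finset (Fin d → ℤ),
    if i ∈ B ∧ B ⊆ ball i k ∧ ¬ B ⊆ ball i (k - 1) then J B * chi B σ else 0

/-- `Σ_{B ∋ i, B ⊆ B_i(k), B ⊄ B_i(k-1)} |J_B|`. -/
def shellAbs {d : ℕ} (J : Finset (Fin d → ℤ) → ℝ) (i : Fin d → ℤ) (k : ℕ) : ℝ :=
  ∑' B : Finset (Fin d → ℤ),
    if i ∈ B ∧ B ⊆ ball i k ∧ ¬ B ⊆ ball i (k - 1) then |J B| else 0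

/-- `M_i = 2 exp(β Σ_{B ∋ i} |J_B|)`. -/
def bigM {d : ℕ} (J : Finset (Fin d → ℤ) → ℝ) (β : ℝ) (i : Fin d → ℤ) : ℝ :=
  2 * exp (β * totalJ J i)

/-- The spin flip rate `c_i(σ) = exp(-β Σ_{B ∋ i} J_B χ_B(σ))`. -/
def rate {d : ℕ} (J : Finset (Fin d → ℤ) → ℝ) (β : ℝ) (i : Fin d → ℤ)
    (σ : (Fin d → ℤ) → ℝ) : ℝ :=
  exp (-β * energy J i σ)

/-- The truncated flip rate
`c_i^{[ℓ]}(σ) = exp(-β Σ_{B ∋ i, B ⊄ B_i(ℓ)} |J_B|) exp(-β Σ_{B ∋ i, B ⊆ B_i(ℓ)} J_B χ_B(σ))`. -/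
def rateT {d : ℕ} (J : Finset (Fin d → ℤ) → ℝ) (β : ℝ) (i : Fin d → ℤ) (ℓ : ℕ)
    (σ : (Fin d → ℤ) → ℝ) : ℝ :=
  exp (-β * tailJ J i ℓ) * exp (-β * energyIn J i ℓ σ)

/-- The update probabilities `p_i^{[k]}(-σ(i) | σ)`. -/
def updateP {d : ℕ} (J : Finset (Fin d → ℤ) → ℝ) (β : ℝ) (i : Fin d → ℤ)
    (σ : (Fin d → ℤ) → ℝ) : ℕ → ℝ
  | 0 => 1 / 2
  | 1 => (1 / bigM J β i) *
      ((exp (-β * energyIn J i 1 σ) - exp (-β * innerAbs J i 1)) /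
        (1 - exp (-2 * β * innerAbs J i 1) * exp (-β * tailJ J i 1)))
  | (k+2) => (1 / bigM J β i) * exp (-β * energyIn J i (k + 1) σ) *
      ((exp (-β * shellE J i (k + 2) σ) - exp (-β * shellAbs J i (k + 2))) /
        (1 - exp (-β * shellAbs J i (k + 2))))

/-
Going from level `k - 1` to level `k` moves the couplings of the shell
`B_i(k) \ B_i(k - 1)` out of the tail, where they contribute `exp (-β S_k)` with
`S_k = Σ |J_B|`, into the energy, where they contribute `exp (-β F_k)` with
`F_k = Σ J_B χ_B(σ)` and `|F_k| ≤ S_k`. So the increment `c_i^{[k]} - c_i^{[k-1]}` is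
`exp (-β S_i^{>k}) exp (-β E_{k-1}) (exp (-β F_k) - exp (-β S_k)) ≥ 0`, with `E_{k-1}` the
energy inside `B_i(k - 1)`, and this is `M_i λ_i(k) p_i^{[k]}` once the normalisation of `p_i^{[k]}` is cleared. At level `0` only
sets `B ⊆ B_i(0) = {i}` lie inside the ball, and they carry `J_B = 0`; this gives the base
case, and summing the increments gives the decomposition.
-/

section RestrictedSums

variable {α E : Type*} [NormedAddCommGroup E]

theorem Summable.ite_of_imp [CompleteSpace E] {f : α → E} {p q : α → Prop}
    [DecidablePred p] [DecidablePred q]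
    (hf : Summable fun a => if p a then f a else 0) (hqp : ∀ a, q a → p a) :
    Summable fun a => if q a then f a else 0 :=
  (hf.indicator {a | q a}).congr fun a => by
    by_cases hq : q a <;> simp [hq, hqp a]

theorem tsum_ite_eq_add_of_iff [CompleteSpace E] {f : α → E} {p q r : α → Prop}
    [DecidablePred p] [DecidablePred q] [DecidablePred r]
    (hf : Summable fun a => if p a then f a else 0)
    (hpqr : ∀ a, p a ↔ q a ∨ r a) (hqr : ∀ a, q a → ¬ r a) :
    ∑' a, (if p a then f a else 0) =
      ∑' a, (if q a then f a else 0) + ∑' a, (if r a then f a else 0) := by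
  rw [← (hf.ite_of_imp fun a h => (hpqr a).2 (.inl h)).tsum_add
    (hf.ite_of_imp fun a h => (hpqr a).2 (.inr h))]
  refine tsum_congr fun a => ?_
  by_cases hq : q a
  · simp [hq, hqr a hq, (hpqr a).2 (.inl hq)]
  · by_cases hr : r a <;> simp [hq, hr, hpqr a]

theorem norm_tsum_ite_le {f : α → E} {g : α → ℝ} {p : α → Prop} [DecidablePred p]
    (hg : Summable fun a => if p a then g a else 0) (hfg : ∀ a, p a → ‖f a‖ ≤ g a) :
    ‖∑' a, if p a then f a else 0‖ ≤ ∑' a, if p a then g a else 0 :=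
  tsum_of_norm_bounded hg.hasSum fun a => by
    by_cases hp : p a <;> simp [hp, hfg a]

end RestrictedSums

theorem mul_eq_mul_mul_one_div_mul_div {K : Type*} [Field K] {M D N : K} (c : K) (hM : M ≠ 0)
    (hDN : D = 0 → N = 0) : c * N = M * (c * D) * (1 / M * (N / D)) :=
  calc c * N = c * (D * (N / D)) := by rw [mul_div_cancel_of_imp' hDN]
    _ = _ := by field_simp

theorem ball_subset_ball {d : ℕ} (i : Fin d → ℤ) {k l : ℕ} (hkl : k ≤ l) :
    ball i k ⊆ ball i l := by
  have hkl' : (k : ℤ) ≤ l := by exact_mod_cast hkl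
  intro j
  simp only [ball, Finset.mem_filter, Finset.mem_Icc, Pi.le_def]
  rintro ⟨⟨hlo, hhi⟩, hdist⟩
  exact ⟨⟨fun t => by linarith [hlo t], fun t => by linarith [hhi t]⟩, hdist.trans hkl'⟩

theorem ball_zero_subset {d : ℕ} (i : Fin d → ℤ) : ball i 0 ⊆ {i} := by
  intro j hj
  simp only [ball, Nat.cast_zero, sub_zero, add_zero, Finset.Icc_self, Finset.mem_filter] at hj
  exact hj.1

section SiteSums

variable {d : ℕ} {J : Finset (Fin d → ℤ) → ℝ} {i : Fin d → ℤ}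
  {σ : (Fin d → ℤ) → ℝ}

theorem tailJ_nonneg (k : ℕ) : 0 ≤ tailJ J i k :=
  tsum_nonneg fun B => by split_ifs <;> simp

theorem norm_mul_chi_le (B : Finset (Fin d → ℤ)) (hσ : ∀ j, |σ j| ≤ 1) :
    ‖J B * chi B σ‖ ≤ |J B| := by
  rw [Real.norm_eq_abs, abs_mul, chi, Finset.abs_prod]
  exact mul_le_of_le_one_right (abs_nonneg _)
    (Finset.prod_le_one (fun j _ => abs_nonneg _) fun j _ => hσ j)

section BallZero

variable (hJ : ∀ B : Finset (Fin d → ℤ), B.card ≤ 1 → J B = 0)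
include hJ

theorem J_eq_zero_of_subset_ball_zero {B : Finset (Fin d → ℤ)} (hB : B ⊆ ball i 0) :
    J B = 0 :=
  hJ B ((Finset.card_le_card (hB.trans (ball_zero_subset i))).trans_eq (Finset.card_singleton i))

theorem tailJ_zero : tailJ J i 0 = totalJ J i :=
  tsum_congr fun B => by
    by_cases hB : B ⊆ ball i 0
    · simp [hB, J_eq_zero_of_subset_ball_zero hJ hB]
    · simp [hB]

theorem energyIn_zero : energyIn J i 0 σ = 0 :=
  (tsum_congr fun B => by
    split_ifs with hB
    · rw [J_eq_zero_of_subset_ball_zero hJ hB.2, zero_mul]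
    · rfl).trans tsum_zero

end BallZero

variable (hsum : Summable fun B : Finset (Fin d → ℤ) => if i ∈ B then |J B| else 0)
include hsum

theorem totalJ_eq_tailJ_add_innerAbs (k : ℕ) : totalJ J i = tailJ J i k + innerAbs J i k :=
  tsum_ite_eq_add_of_iff hsum (fun B => by tauto) fun B h h' => h.2 h'.2

theorem tailJ_eq_tailJ_succ_add_shellAbs (k : ℕ) :
    tailJ J i k = tailJ J i (k + 1) + shellAbs J i (k + 1) :=
  tsum_ite_eq_add_of_iff (hsum.ite_of_imp fun _ h => h.1)
    (fun B => by
      have := fun h : B ⊆ ball i k => h.trans (ball_subset_ball i k.le_succ)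
      simp only [Nat.add_sub_cancel]; tauto)
    fun B h h' => h.2 h'.2.1

variable (hσ : ∀ j, |σ j| ≤ 1)
include hσ

theorem summable_ite_mul_chi :
    Summable fun B : Finset (Fin d → ℤ) => if i ∈ B then J B * chi B σ else 0 :=
  hsum.of_norm_bounded fun B => by
    split_ifs
    exacts [norm_mul_chi_le B hσ, by simp]

theorem energyIn_succ (k : ℕ) :
    energyIn J i (k + 1) σ = energyIn J i k σ + shellE J i (k + 1) σ :=
  tsum_ite_eq_add_of_iff ((summable_ite_mul_chi hsum hσ).ite_of_imp fun _ h => h.1)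
    (fun B => by
      have := fun h : B ⊆ ball i k => h.trans (ball_subset_ball i k.le_succ)
      simp only [Nat.add_sub_cancel]; tauto)
    fun B h h' => h'.2.2 h.2

theorem abs_energyIn_le (k : ℕ) : |energyIn J i k σ| ≤ innerAbs J i k :=
  norm_tsum_ite_le (hsum.ite_of_imp fun _ h => h.1) fun B _ => norm_mul_chi_le B hσ

theorem abs_shellE_le (k : ℕ) : |shellE J i k σ| ≤ shellAbs J i k :=
  norm_tsum_ite_le (hsum.ite_of_imp fun _ h => h.1) fun B _ => norm_mul_chi_le B hσ

end SiteSums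

section Rates

variable {d : ℕ} {J : Finset (Fin d → ℤ) → ℝ} {β : ℝ} {i : Fin d → ℤ}
  {σ : (Fin d → ℤ) → ℝ}

theorem bigM_ne_zero : bigM J β i ≠ 0 := by
  rw [bigM]
  positivity

theorem rateT_zero (hJ : ∀ B : Finset (Fin d → ℤ), B.card ≤ 1 → J B = 0) :
    rateT J β i 0 σ = 1 / 2 * bigM J β i * lam J β i 0 := by
  rw [rateT, tailJ_zero hJ, energyIn_zero hJ, bigM, lam, mul_zero, exp_zero, mul_one,
    show 1 / 2 * (2 * exp (β * totalJ J i)) * exp (-2 * β * totalJ J i) =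
      exp (β * totalJ J i + -2 * β * totalJ J i) by rw [exp_add]; ring]
  ring_nf

variable (hsum : Summable fun B : Finset (Fin d → ℤ) => if i ∈ B then |J B| else 0)
  (hσ : ∀ j, |σ j| ≤ 1)
include hsum hσ

theorem rateT_succ_sub_rateT (k : ℕ) :
    rateT J β i (k + 1) σ - rateT J β i k σ =
      exp (-β * tailJ J i (k + 1)) * exp (-β * energyIn J i k σ) *
        (exp (-β * shellE J i (k + 1) σ) - exp (-β * shellAbs J i (k + 1))) := by
  rw [rateT, rateT, tailJ_eq_tailJ_succ_add_shellAbs hsum k, energyIn_succ hsum hσ k,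
    mul_add, mul_add, exp_add, exp_add]
  ring

theorem rateT_le_rateT_succ (hβ : 0 ≤ β) (k : ℕ) :
    rateT J β i k σ ≤ rateT J β i (k + 1) σ := by
  have hF : shellE J i (k + 1) σ ≤ shellAbs J i (k + 1) :=
    (le_abs_self _).trans (abs_shellE_le hsum hσ _)
  have hexp : exp (-β * shellAbs J i (k + 1)) ≤ exp (-β * shellE J i (k + 1) σ) :=
    exp_le_exp.mpr (by nlinarith)
  rw [← sub_nonneg, rateT_succ_sub_rateT hsum hσ]
  exact mul_nonneg (by positivity) (sub_nonneg.mpr hexp)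

theorem rateT_one_sub_rateT_zero (hβ : 0 < β)
    (hJ : ∀ B : Finset (Fin d → ℤ), B.card ≤ 1 → J B = 0) :
    rateT J β i 1 σ - rateT J β i 0 σ = bigM J β i * lam J β i 1 * updateP J β i σ 1 := by
  have hS : shellAbs J i 1 = innerAbs J i 1 := by
    linarith [tailJ_eq_tailJ_succ_add_shellAbs hsum 0, totalJ_eq_tailJ_add_innerAbs hsum 1,
      tailJ_zero (i := i) hJ]
  have hF : shellE J i 1 σ = energyIn J i 1 σ := by
    linarith [energyIn_succ hsum hσ 0, energyIn_zero (i := i) (σ := σ) hJ]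
  have hlam : lam J β i 1 = exp (-β * tailJ J i 1) *
      (1 - exp (-2 * β * innerAbs J i 1) * exp (-β * tailJ J i 1)) := by
    rw [lam, totalJ_eq_tailJ_add_innerAbs hsum 1, mul_sub, mul_one, ← exp_add, ← exp_add]
    ring_nf
  -- `updateP J β i σ 1` divides by this; it vanishes only if `totalJ J i = 0`
  have hdeg : 1 - exp (-2 * β * innerAbs J i 1) * exp (-β * tailJ J i 1) = 0 →
      exp (-β * energyIn J i 1 σ) - exp (-β * innerAbs J i 1) = 0 := by
    intro h
    have hAT : 2 * innerAbs J i 1 + tailJ J i 1 = 0 := by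
      rw [← exp_add, sub_eq_zero, eq_comm, exp_eq_one_iff] at h
      nlinarith
    have hA0 : innerAbs J i 1 = 0 := by
      linarith [tailJ_nonneg (J := J) (i := i) 1,
        (abs_nonneg _).trans (abs_energyIn_le hsum hσ 1)]
    have hE0 : energyIn J i 1 σ = 0 := abs_nonpos_iff.mp (hA0 ▸ abs_energyIn_le hsum hσ 1)
    rw [hA0, hE0, sub_self]
  calc rateT J β i 1 σ - rateT J β i 0 σ
      = exp (-β * tailJ J i 1) * (exp (-β * energyIn J i 1 σ) - exp (-β * innerAbs J i 1)) := by
        rw [rateT_succ_sub_rateT hsum hσ 0, energyIn_zero hJ, hS, hF, mul_zero, exp_zero, mul_one]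
    _ = bigM J β i * lam J β i 1 * updateP J β i σ 1 := by
        rw [hlam, updateP]
        exact mul_eq_mul_mul_one_div_mul_div _ bigM_ne_zero hdeg

theorem rateT_add_two_sub_rateT_add_one (hβ : 0 < β) (m : ℕ) :
    rateT J β i (m + 2) σ - rateT J β i (m + 1) σ =
      bigM J β i * lam J β i (m + 2) * updateP J β i σ (m + 2) := by
  have hlam : lam J β i (m + 2) =
      exp (-β * tailJ J i (m + 2)) * (1 - exp (-β * shellAbs J i (m + 2))) := by
    rw [lam, tailJ_eq_tailJ_succ_add_shellAbs hsum (m + 1), mul_add, exp_add]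
    ring
  have hdeg : 1 - exp (-β * shellAbs J i (m + 2)) = 0 →
      exp (-β * shellE J i (m + 2) σ) - exp (-β * shellAbs J i (m + 2)) = 0 := by
    intro h
    rw [sub_eq_zero, eq_comm, exp_eq_one_iff, mul_eq_zero, neg_eq_zero] at h
    have hS0 : shellAbs J i (m + 2) = 0 := h.resolve_left hβ.ne'
    have hF0 : shellE J i (m + 2) σ = 0 := abs_nonpos_iff.mp (hS0 ▸ abs_shellE_le hsum hσ _)
    rw [hS0, hF0, sub_self]
  rw [rateT_succ_sub_rateT hsum hσ (m + 1), hlam, updateP,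
    mul_eq_mul_mul_one_div_mul_div _ bigM_ne_zero hdeg]
  ring

theorem rateT_succ_sub_rateT_eq (hβ : 0 < β)
    (hJ : ∀ B : Finset (Fin d → ℤ), B.card ≤ 1 → J B = 0) : ∀ k : ℕ,
    rateT J β i (k + 1) σ - rateT J β i k σ =
      bigM J β i * lam J β i (k + 1) * updateP J β i σ (k + 1)
  | 0 => rateT_one_sub_rateT_zero hsum hσ hβ hJ
  | m + 1 => rateT_add_two_sub_rateT_add_one hsum hσ hβ m

theorem rateT_eq_bigM_mul (hβ : 0 < β)
    (hJ : ∀ B : Finset (Fin d → ℤ), B.card ≤ 1 → J B = 0) (ℓ : ℕ) :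
    rateT J β i ℓ σ = bigM J β i * (lam J β i 0 * (1 / 2) +
      ∑ k ∈ Finset.Icc 1 ℓ, lam J β i k * updateP J β i σ k) := by
  induction ℓ with
  | zero => rw [rateT_zero hJ, Finset.Icc_eq_empty_of_lt one_pos, Finset.sum_empty]; ring
  | succ ℓ ih =>
    rw [Finset.sum_Icc_succ_top (Nat.le_add_left 1 ℓ),
      ← sub_add_cancel (rateT J β i (ℓ + 1) σ) (rateT J β i ℓ σ),
      rateT_succ_sub_rateT_eq hsum hσ hβ hJ, ih]
    ring

end Rates

/-- for every `ℓ ≥ 1` the truncated flip rate satisfies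
`c_i^{[ℓ]}(σ) = M_i [λ_i(0)/2 + Σ_{k=1}^ℓ λ_i(k) p_i^{[k]}(-σ(i)|σ)]`; moreover
`c_i^{[k]}(σ) - c_i^{[k-1]}(σ) = M_i λ_i(k) p_i^{[k]}(-σ(i)|σ) ≥ 0` for every
`k ≥ 1`, where `c_i^{[0]}(σ) = (1/2) M_i λ_i(0)`. -/
theorem rateT_decomposition {d : ℕ} (J : Finset (Fin d → ℤ) → ℝ) (β : ℝ)
    (hβ : 0 < β)
    (hJ : ∀ B : Finset (Fin d → ℤ), B.card ≤ 1 → J B = 0)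
    (hsum : ∀ i : Fin d → ℤ,
      Summable (fun B : Finset (Fin d → ℤ) => if i ∈ B then |J B| else 0))
    (σ : (Fin d → ℤ) → ℝ) (hσ : ∀ j, σ j = 1 ∨ σ j = -1)
    (i : Fin d → ℤ) :
    rateT J β i 0 σ = (1 / 2) * bigM J β i * lam J β i 0 ∧
    (∀ ℓ : ℕ, 1 ≤ ℓ →
      rateT J β i ℓ σ =
        bigM J β i * (lam J β i 0 * (1 / 2) +
          ∑ k ∈ Finset.Icc 1 ℓ, lam J β i k * updateP J β i σ k)) ∧
    (∀ k : ℕ, 1 ≤ k →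
      rateT J β i k σ - rateT J β i (k - 1) σ =
        bigM J β i * lam J β i k * updateP J β i σ k ∧
      0 ≤ rateT J β i k σ - rateT J β i (k - 1) σ) := by
  have hσ' : ∀ j, |σ j| ≤ 1 := fun j => by rcases hσ j with h | h <;> simp [h]
  refine ⟨rateT_zero hJ, fun ℓ _ => rateT_eq_bigM_mul (hsum i) hσ' hβ hJ ℓ,
    fun k hk => ?_⟩
  obtain ⟨m, rfl⟩ := Nat.exists_eq_add_of_le' hk
  rw [Nat.add_sub_cancel]
  exact ⟨rateT_succ_sub_rateT_eq (hsum i) hσ' hβ hJ m,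
    sub_nonneg.mpr (rateT_le_rateT_succ (hsum i) hσ' hβ.le m)⟩
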